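/- Let B be a separable unital C*-algebra with stable rank one. Then for every x in the ultrapower B_ω there exists a unitary u ∈ B_ω with x = u|x|, and consequently B_ω has stable rank one. -/

import Mathlib

/-!
Common definitions for formalizing "Nuclear dimension and 𝒵-stability"
(Sato–White–Winter).  All C⋆-algebras are complex.  See the comments on the
individual definitions for the intended mathematical meaning.
-/

open scoped Topology BoundedContinuousFunction NNReal ENNReal ZeroAtInfty Kronecker Matrix.Norms.L2Operator

noncomputable section

namespace SWW

/-- Matrix algebras `Mₙ(ℂ)` as C⋆-algebras, with the operator norm coming from the
scoped instances `Matrix.L2OpNorm`. -/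
noncomputable instance matrixCStarAlgebra (n : ℕ) : CStarAlgebra (Matrix (Fin n) (Fin n) ℂ) := by
  constructor

/-- An element of a C⋆-algebra (or a ⋆-ring) is positive iff it is of the form `star y * y`;
we use this purely algebraic characterisation of positivity. -/
def IsPos {A : Type*} [Mul A] [Star A] (x : A) : Prop := ∃ y : A, x = star y * y

/-- A linear map between C⋆-algebras is completely positive iff
`∑ i j, star (b i) * φ (star (a i) * a j) * (b j)` is positive for all finite
families `(a i)` in `A`, `(b i)` in `B`.  This is the standard characterisation of
complete positivity. -/
def IsCompletelyPositive {A B : Type*} [NonUnitalCStarAlgebra A] [NonUnitalCStarAlgebra B]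
    (φ : A →ₗ[ℂ] B) : Prop :=
  ∀ (n : ℕ) (a : Fin n → A) (b : Fin n → B),
    IsPos (∑ i : Fin n, ∑ j : Fin n, star (b i) * φ (star (a i) * a j) * b j)

/-- Completely positive and contractive (c.p.c.). -/
def IsCPC {A B : Type*} [NonUnitalCStarAlgebra A] [NonUnitalCStarAlgebra B]
    (φ : A →ₗ[ℂ] B) : Prop :=
  IsCompletelyPositive φ ∧ ∀ a : A, ‖φ a‖ ≤ ‖a‖

/-- A map is order zero if it preserves orthogonality of positive elements. -/
def IsOrderZero {A B : Type*} [NonUnitalCStarAlgebra A] [NonUnitalCStarAlgebra B]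
    (φ : A →ₗ[ℂ] B) : Prop :=
  ∀ x y : A, IsPos x → IsPos y → x * y = 0 → φ x * φ y = 0

/-- Order zero on a subset (typically a C⋆-subalgebra). -/
def IsOrderZeroOn {A B : Type*} [NonUnitalCStarAlgebra A] [NonUnitalCStarAlgebra B]
    (φ : A →ₗ[ℂ] B) (s : Set A) : Prop :=
  ∀ x ∈ s, ∀ y ∈ s, IsPos x → IsPos y → x * y = 0 → φ x * φ y = 0

/-- A tracial state on a unital C⋆-algebra, as a linear functional:
unital, positive and tracial.  (Positive unital functionals are automatically
states, i.e. of norm one.) -/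
def IsTracialState {A : Type*} [CStarAlgebra A] (τ : A →ₗ[ℂ] ℂ) : Prop :=
  τ 1 = 1 ∧ (∀ a : A, ∃ r : ℝ, 0 ≤ r ∧ τ (star a * a) = r) ∧
    ∀ a b : A, τ (a * b) = τ (b * a)

/-- `A` has exactly one tracial state. -/
def HasUniqueTracialState (A : Type*) [CStarAlgebra A] : Prop :=
  ∃! τ : A →ₗ[ℂ] ℂ, IsTracialState τ

/-- An extremal tracial state: an extreme point of the tracial state space. -/
def IsExtremalTracialState {A : Type*} [CStarAlgebra A] (τ : A →ₗ[ℂ] ℂ) : Prop :=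
  IsTracialState τ ∧
    ∀ (τ₁ τ₂ : A →ₗ[ℂ] ℂ) (t : ℝ), IsTracialState τ₁ → IsTracialState τ₂ →
      0 < t → t < 1 → τ = (t : ℂ) • τ₁ + ((1 - t : ℝ) : ℂ) • τ₂ → τ₁ = τ₂

/-- A C⋆-algebra is simple if it is nonzero and has no closed two-sided ideals other
than `0` and the whole algebra. -/
def IsSimpleCStarAlgebra (A : Type*) [CStarAlgebra A] : Prop :=
  Nontrivial A ∧ ∀ I : TwoSidedIdeal A, IsClosed (I : Set A) → I = ⊥ ∨ I = ⊤

/-- A unital C⋆-algebra has stable rank one if its invertible elements are dense. -/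
def HasStableRankOne (A : Type*) [CStarAlgebra A] : Prop :=
  Dense {x : A | IsUnit x}

/-- A unital C⋆-algebra is stably finite iff every isometry in every matrix algebra over it
is a unitary. -/
def IsStablyFinite (A : Type*) [CStarAlgebra A] : Prop :=
  ∀ (n : ℕ) (v : Matrix (Fin n) (Fin n) A), star v * v = 1 → v * star v = 1

/-- A unital C⋆-algebra is non-elementary iff it is not ⋆-isomorphic to a (full) matrix
algebra.  (A unital elementary C⋆-algebra is a full matrix algebra.) -/
def IsNonElementary (A : Type*) [CStarAlgebra A] : Prop :=
  ∀ n : ℕ, IsEmpty (A ≃⋆ₐ[ℂ] Matrix (Fin n) (Fin n) ℂ)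

/-- A unital C⋆-algebra has no elementary quotients iff it admits no surjective
⋆-homomorphism onto a (full) matrix algebra.  (Quotients of unital C⋆-algebras are unital,
and unital elementary C⋆-algebras are exactly the full matrix algebras.) -/
def HasNoElementaryQuotients (A : Type*) [CStarAlgebra A] : Prop :=
  ∀ (n : ℕ) (φ : A →⋆ₐ[ℂ] Matrix (Fin (n + 1)) (Fin (n + 1)) ℂ), ¬ Function.Surjective φ

/-- A bundled finite dimensional C⋆-algebra. -/
structure FinDimCStarAlgebra : Type 1 where
  carrier : Type
  [cstar : CStarAlgebra carrier]
  [findim : FiniteDimensional ℂ carrier]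

attribute [instance] FinDimCStarAlgebra.cstar FinDimCStarAlgebra.findim

instance : CoeSort FinDimCStarAlgebra Type := ⟨FinDimCStarAlgebra.carrier⟩

/-- `A` has nuclear dimension at most `d`:  completely positive approximations of the
identity through finite dimensional C⋆-algebras `F = F⁰ ⊕ ⋯ ⊕ F^d` with c.p.c. downward
maps and upward maps which are c.p.c. order zero on each summand.  (Here the approximation
is recorded summandwise, which is equivalent.) -/
def NuclearDimLE (A : Type*) [CStarAlgebra A] (d : ℕ) : Prop :=
  ∀ (s : Finset A) (ε : ℝ), 0 < ε →
    ∃ (F : Fin (d + 1) → FinDimCStarAlgebra)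
      (ψ : ∀ j, A →ₗ[ℂ] (F j : Type)) (φ : ∀ j, (F j : Type) →ₗ[ℂ] A),
      (∀ j, IsCPC (ψ j)) ∧ (∀ j, IsCPC (φ j) ∧ IsOrderZero (φ j)) ∧
      ∀ a ∈ s, ‖(∑ j, φ j (ψ j a)) - a‖ < ε

/-- A C⋆-algebra is nuclear iff its identity map is a point-norm limit of c.p.c. maps
factoring through finite dimensional C⋆-algebras. -/
def IsNuclear (A : Type*) [CStarAlgebra A] : Prop :=
  ∀ (s : Finset A) (ε : ℝ), 0 < ε →
    ∃ (F : FinDimCStarAlgebra) (ψ : A →ₗ[ℂ] (F : Type)) (φ : (F : Type) →ₗ[ℂ] A),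
      IsCPC ψ ∧ IsCPC φ ∧ ∀ a ∈ s, ‖φ (ψ a) - a‖ < ε

/-- A linear map `θ : A → B` between C⋆-algebras is nuclear if it is a point-norm limit of
c.p.c. maps factoring through finite dimensional C⋆-algebras. -/
def IsNuclearMap {A B : Type*} [CStarAlgebra A] [CStarAlgebra B] (θ : A →ₗ[ℂ] B) : Prop :=
  ∀ (s : Finset A) (ε : ℝ), 0 < ε →
    ∃ (F : FinDimCStarAlgebra) (ψ : A →ₗ[ℂ] (F : Type)) (φ : (F : Type) →ₗ[ℂ] B),
      IsCPC ψ ∧ IsCPC φ ∧ ∀ a ∈ s, ‖φ (ψ a) - θ a‖ < ε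

/-- Exactness, in the form of nuclear embeddability: there is an injective unital
⋆-homomorphism of `A` into some C⋆-algebra which is a nuclear map. -/
def IsExact (A : Type*) [CStarAlgebra A] : Prop :=
  ∃ (N : Type) (_ : CStarAlgebra N) (ι : A →⋆ₐ[ℂ] N),
    Function.Injective ι ∧ IsNuclearMap (ι : A →⋆ₐ[ℂ] N).toLinearMap

/-!  ### Ultrapowers and sequence algebras  -/

/-- Data realising `Aω` as the ultrapower `A_ω = ℓ^∞(A)/c_ω(A)` of `A` along the
(free) ultrafilter `ω`:  a surjective unital ⋆-homomorphism from the bounded sequences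
`ℓ^∞(A) = (ℕ →ᵇ A)` whose kernel is exactly `c_ω(A)`. -/
structure UltrapowerData (ω : Ultrafilter ℕ) (A Aω : Type*) [CStarAlgebra A]
    [CStarAlgebra Aω] where
  π : (ℕ →ᵇ A) →⋆ₐ[ℂ] Aω
  surjective : Function.Surjective π
  ker : ∀ x : ℕ →ᵇ A, π x = 0 ↔ Filter.Tendsto (fun n => ‖x n‖) ω (𝓝 0)

/-- The canonical copy of `A` inside the ultrapower, via constant sequences. -/
def UltrapowerData.incl {ω : Ultrafilter ℕ} {A Aω : Type*} [CStarAlgebra A] [CStarAlgebra Aω]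
    (U : UltrapowerData ω A Aω) (a : A) : Aω :=
  U.π (BoundedContinuousFunction.const ℕ a)

/-- Membership in the trace-kernel ideal `J_{A,τ} ⊲ A_ω` of the tracial state `τ`:
`x` is represented by a bounded sequence `(x_n)` with `lim_{n→ω} τ(x_n⋆ x_n) = 0`. -/
def UltrapowerData.InTraceKernel {ω : Ultrafilter ℕ} {A Aω : Type*} [CStarAlgebra A]
    [CStarAlgebra Aω] (U : UltrapowerData ω A Aω) (τ : A →ₗ[ℂ] ℂ) (x : Aω) : Prop :=
  ∃ f : ℕ →ᵇ A, U.π f = x ∧ Filter.Tendsto (fun n => ‖τ (star (f n) * f n)‖) ω (𝓝 0)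

/-- `Ψ : A_ω → B_ω` is the map induced by the (uniformly bounded) sequence of maps
`ψ_n : A → B`, i.e. it is given on representative sequences by `(x_n) ↦ (ψ_n (x_n))`. -/
def Induces {ω : Ultrafilter ℕ} {A Aω B Bω : Type*} [CStarAlgebra A] [CStarAlgebra Aω]
    [CStarAlgebra B] [CStarAlgebra Bω] (UA : UltrapowerData ω A Aω)
    (UB : UltrapowerData ω B Bω) (ψ : ℕ → A →ₗ[ℂ] B) (Ψ : Aω →ₗ[ℂ] Bω) : Prop :=
  ∀ (x : ℕ →ᵇ A) (y : ℕ →ᵇ B), (∀ n, y n = ψ n (x n)) → Ψ (UA.π x) = UB.π y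

/-- Data realising `Q` as the sequence algebra `ℓ^∞(A)/c₀(A)`. -/
structure SeqAlgebraData (A Q : Type*) [CStarAlgebra A] [CStarAlgebra Q] where
  π : (ℕ →ᵇ A) →⋆ₐ[ℂ] Q
  surjective : Function.Surjective π
  ker : ∀ x : ℕ →ᵇ A, π x = 0 ↔ Filter.Tendsto (fun n => ‖x n‖) Filter.atTop (𝓝 0)

/-- The canonical copy of `A` inside `ℓ^∞(A)/c₀(A)`, via constant sequences. -/
def SeqAlgebraData.incl {A Q : Type*} [CStarAlgebra A] [CStarAlgebra Q]
    (U : SeqAlgebraData A Q) (a : A) : Q :=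
  U.π (BoundedContinuousFunction.const ℕ a)

/-!  ### Tensor products

`TensorEmbedding A B T` realises `T` as a C⋆-completion of the algebraic tensor product
`A ⊗ B` of the unital C⋆-algebras `A` and `B`:  commuting unital embeddings of `A` and `B`
into `T` which are jointly injective on the algebraic tensor product and have jointly dense
linear span.  `IsMinimal` additionally states that the identity on the algebraic tensor
product extends to a ⋆-homomorphism from any other C⋆-completion to `T`; this says exactly
that the norm on `T` is the minimal (= spatial) C⋆-norm, so a minimal `TensorEmbedding A B T`
realises `T` as the spatial tensor product `A ⊗ B`.  -/

structure TensorEmbedding (A B T : Type*) [CStarAlgebra A] [CStarAlgebra B]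
    [CStarAlgebra T] where
  left : A →⋆ₐ[ℂ] T
  right : B →⋆ₐ[ℂ] T
  commutes : ∀ (a : A) (b : B), left a * right b = right b * left a
  injective' : ∀ (n : ℕ) (a : Fin n → A) (b : Fin n → B), LinearIndependent ℂ b →
    (∑ i, left (a i) * right (b i)) = 0 → ∀ i, a i = 0
  dense' : Dense ((Submodule.span ℂ {x : T | ∃ a b, x = left a * right b} : Submodule ℂ T) : Set T)

/-- The elementary tensor `a ⊗ b` inside the realisation `T` of `A ⊗ B`. -/
def TensorEmbedding.tmul {A B T : Type*} [CStarAlgebra A] [CStarAlgebra B] [CStarAlgebra T]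
    (t : TensorEmbedding A B T) (a : A) (b : B) : T :=
  t.left a * t.right b

/-- `T` carries the minimal (spatial) C⋆-norm:  any other C⋆-completion of `A ⊗ B`
maps onto `T` compatibly with the embeddings. -/
def TensorEmbedding.IsMinimal {A B T : Type*} [CStarAlgebra A] [CStarAlgebra B] [CStarAlgebra T]
    (t : TensorEmbedding A B T) : Prop :=
  ∀ (S : Type) [CStarAlgebra S], ∀ s : TensorEmbedding A B S,
    ∃ φ : S →⋆ₐ[ℂ] T, (∀ a, φ (s.left a) = t.left a) ∧ ∀ b, φ (s.right b) = t.right b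

/-- `A` tensorially absorbs `U`, i.e. `A ≅ A ⊗ U` (spatial tensor product). -/
def TensorAbsorbs (A U : Type*) [CStarAlgebra A] [CStarAlgebra U] : Prop :=
  ∃ (T : Type) (_ : CStarAlgebra T) (t : TensorEmbedding A U T),
    t.IsMinimal ∧ Nonempty (A ≃⋆ₐ[ℂ] T)

/-- The analogous notion of a C⋆-completion of the tensor product for non-unital
C⋆-algebras (used for cones `C₀(0,1] ⊗ A`). -/
structure NUTensorEmbedding (A B T : Type*) [NonUnitalCStarAlgebra A] [NonUnitalCStarAlgebra B]
    [NonUnitalCStarAlgebra T] where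
  left : A →⋆ₙₐ[ℂ] T
  right : B →⋆ₙₐ[ℂ] T
  commutes : ∀ (a : A) (b : B), left a * right b = right b * left a
  injective' : ∀ (n : ℕ) (a : Fin n → A) (b : Fin n → B), LinearIndependent ℂ b →
    (∑ i, left (a i) * right (b i)) = 0 → ∀ i, a i = 0
  dense' : Dense ((Submodule.span ℂ {x : T | ∃ a b, x = left a * right b} : Submodule ℂ T) : Set T)

/-!  ### Dimension drop algebras, the Jiang–Su algebra, UHF algebras -/

/-- The underlying set of the dimension drop algebra
`Z_{p,q} = {f ∈ C([0,1], M_p ⊗ M_q) : f(0) ∈ M_p ⊗ 1, f(1) ∈ 1 ⊗ M_q}`. -/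
def dimDropSet (p q : ℕ) : Set C(unitInterval, Matrix (Fin p × Fin q) (Fin p × Fin q) ℂ) :=
  {f | (∃ a : Matrix (Fin p) (Fin p) ℂ, f 0 = a ⊗ₖ (1 : Matrix (Fin q) (Fin q) ℂ)) ∧
      ∃ b : Matrix (Fin q) (Fin q) ℂ, f 1 = (1 : Matrix (Fin p) (Fin p) ℂ) ⊗ₖ b}

/-- The dimension drop algebra `Z_{p,q}`, as a ⋆-subalgebra of `C([0,1], M_p ⊗ M_q)`
(identifying `M_p ⊗ M_q = M_{pq}` via the Kronecker product). -/
def DimDrop (p q : ℕ) :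
    StarSubalgebra ℂ C(unitInterval, Matrix (Fin p × Fin q) (Fin p × Fin q) ℂ) where
  carrier := dimDropSet p q
  mul_mem' := by
    rintro f g ⟨⟨a, ha⟩, b, hb⟩ ⟨⟨a', ha'⟩, b', hb'⟩
    constructor
    · exact ⟨a * a', by simp [ha, ha', ← Matrix.mul_kronecker_mul]⟩
    · exact ⟨b * b', by simp [hb, hb', ← Matrix.mul_kronecker_mul]⟩
  one_mem' :=
    ⟨⟨1, by simp [Matrix.one_kronecker_one]⟩, ⟨1, by simp [Matrix.one_kronecker_one]⟩⟩
  add_mem' := by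
    rintro f g ⟨⟨a, ha⟩, b, hb⟩ ⟨⟨a', ha'⟩, b', hb'⟩
    exact ⟨⟨a + a', by simp [ha, ha', Matrix.add_kronecker]⟩,
      ⟨b + b', by simp [hb, hb', Matrix.kronecker_add]⟩⟩
  zero_mem' :=
    ⟨⟨0, by simp [Matrix.zero_kronecker]⟩, ⟨0, by simp [Matrix.kronecker_zero]⟩⟩
  algebraMap_mem' := by
    intro c
    refine ⟨⟨c • 1, ?_⟩, ⟨c • 1, ?_⟩⟩ <;>
      simp [Algebra.algebraMap_eq_smul_one, Matrix.smul_kronecker, Matrix.kronecker_smul,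
        Matrix.one_kronecker_one]
  star_mem' := by
    rintro f ⟨⟨a, ha⟩, b, hb⟩
    refine ⟨⟨star a, ?_⟩, ⟨star b, ?_⟩⟩
    · show star f 0 = _
      rw [ContinuousMap.star_apply, ha]
      show (Matrix.kroneckerMap (· * ·) a 1).conjTranspose = _
      ext ⟨i, j⟩ ⟨k, l⟩
      simp only [Matrix.conjTranspose_apply, Matrix.kroneckerMap_apply, Matrix.one_apply,
        apply_ite, map_zero, map_one, mul_ite, mul_one, mul_zero, ite_mul, one_mul, zero_mul]
      split <;> simp_all [eq_comm]
    · show star f 1 = _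
      rw [ContinuousMap.star_apply, hb]
      show (Matrix.kroneckerMap (· * ·) 1 b).conjTranspose = _
      ext ⟨i, j⟩ ⟨k, l⟩
      simp only [Matrix.conjTranspose_apply, Matrix.kroneckerMap_apply, Matrix.one_apply,
        apply_ite, map_zero, map_one, mul_ite, mul_one, mul_zero, ite_mul, one_mul, zero_mul]
      split <;> simp_all [eq_comm]

/-- `Z` is a Jiang–Su algebra: a simple, separable, unital, monotracial C⋆-algebra which
is an inductive limit of prime dimension drop algebras (presented as an increasing union
of unital ⋆-subalgebras, each ⋆-isomorphic to a prime dimension drop algebra, with dense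
union).  By the Jiang–Su uniqueness theorem this characterises `𝒵` up to isomorphism. -/
def IsJiangSu (Z : Type*) [CStarAlgebra Z] : Prop :=
  IsSimpleCStarAlgebra Z ∧ TopologicalSpace.SeparableSpace Z ∧ HasUniqueTracialState Z ∧
    ∃ S : ℕ → StarSubalgebra ℂ Z,
      (∀ n, S n ≤ S (n + 1)) ∧ Dense (⋃ n, (S n : Set Z)) ∧
      ∀ n, ∃ p q : ℕ, 0 < p ∧ 0 < q ∧ Nat.Coprime p q ∧
        Nonempty ((S n) ≃⋆ₐ[ℂ] (DimDrop p q))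

/-- `A` is 𝒵-stable, i.e. `A ≅ A ⊗ 𝒵` (spatial tensor product). -/
def IsZStable (A : Type*) [CStarAlgebra A] : Prop :=
  ∃ (Z : Type) (_ : CStarAlgebra Z), IsJiangSu Z ∧ TensorAbsorbs A Z

/-- `U` is a UHF algebra: a unital inductive limit of full matrix algebras, presented as
an increasing union of unital ⋆-subalgebras, each ⋆-isomorphic to a full matrix algebra,
with dense union. -/
def IsUHF (U : Type*) [CStarAlgebra U] : Prop :=
  ∃ S : ℕ → StarSubalgebra ℂ U,
    (∀ n, S n ≤ S (n + 1)) ∧ Dense (⋃ n, (S n : Set U)) ∧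
    ∀ n, ∃ k : ℕ, 0 < k ∧ Nonempty ((S n) ≃⋆ₐ[ℂ] Matrix (Fin k) (Fin k) ℂ)

/-- A UHF algebra of infinite type: `U ≅ U ⊗ U`. -/
def IsUHFOfInfiniteType (U : Type*) [CStarAlgebra U] : Prop :=
  IsUHF U ∧ TensorAbsorbs U U

/-!  ### Stabilisations, Cuntz comparison, quasitraces and strict comparison -/

/-- The upper-left corner embedding `M_n(D) → M_m(D)` for `n ≤ m`. -/
def matIncl {D : Type*} {n m : ℕ} (_ : n ≤ m) (x : Matrix (Fin n) (Fin n) D)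
    [Zero D] : Matrix (Fin m) (Fin m) D :=
  fun i j => if hi : (i : ℕ) < n then (if hj : (j : ℕ) < n then x ⟨i, hi⟩ ⟨j, hj⟩ else 0) else 0

/-- Data realising `T` as the stabilisation `D ⊗ 𝒦` of `D`:  `T` is the inductive limit
of the matrix algebras `M_n(D)` along the upper-left corner embeddings, via compatible
injective ⋆-homomorphisms with jointly dense range. -/
structure StabilizationOf (D T : Type*) [CStarAlgebra D] [NonUnitalCStarAlgebra T] where
  ι : ∀ n : ℕ, Matrix (Fin n) (Fin n) D →⋆ₙₐ[ℂ] T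
  injective : ∀ n, Function.Injective (ι n)
  compatible : ∀ (n : ℕ) (x : Matrix (Fin n) (Fin n) D),
    ι (n + 1) (matIncl (Nat.le_succ n) x) = ι n x
  dense' : Dense (⋃ n, Set.range (ι n))

/-- Cuntz subequivalence `a ≾ b` in a C⋆-algebra: `a` is a limit of elements `v⋆ b v`. -/
def CuntzLE {T : Type*} [NonUnitalCStarAlgebra T] (a b : T) : Prop :=
  ∀ ε : ℝ, 0 < ε → ∃ v : T, ‖star v * b * v - a‖ < ε

/-- Cuntz equivalence. -/
def CuntzEquiv {T : Type*} [NonUnitalCStarAlgebra T] (a b : T) : Prop :=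
  CuntzLE a b ∧ CuntzLE b a

/-- A lower semicontinuous `2`-quasitrace on a (typically stable) C⋆-algebra `T`, as a
`[0,∞]`-valued function on `T` (only its values on the positive cone matter):
it vanishes at `0`, satisfies the trace identity `τ(x⋆x) = τ(xx⋆)`, is additive on
commuting positive elements, is `ℝ≥0`-homogeneous, is lower semicontinuous on the positive
cone, and extends to a quasitrace on `M₂(T)`. -/
structure IsLsc2Quasitrace {T : Type*} [NonUnitalCStarAlgebra T] [PartialOrder T]
    [StarOrderedRing T] (τ : T → ℝ≥0∞) : Prop where
  map_zero : τ 0 = 0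
  flip : ∀ x : T, τ (star x * x) = τ (x * star x)
  add_commuting : ∀ x y : T, 0 ≤ x → 0 ≤ y → x * y = y * x → τ (x + y) = τ x + τ y
  smul : ∀ (r : ℝ≥0) (x : T), 0 ≤ x → τ (r • x) = r * τ x
  lsc : LowerSemicontinuousOn τ {x : T | 0 ≤ x}
  two_quasitrace : ∃ τ₂ : Matrix (Fin 2) (Fin 2) T → ℝ≥0∞,
    (∀ x : Matrix (Fin 2) (Fin 2) T, τ₂ (star x * x) = τ₂ (x * star x)) ∧
    (∀ x y : Matrix (Fin 2) (Fin 2) T, IsPos x → IsPos y → x * y = y * x →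
      τ₂ (x + y) = τ₂ x + τ₂ y) ∧
    ∀ x : T, 0 ≤ x → τ₂ (Matrix.single 0 0 x) = τ x

/-- `d` is the value `d_τ(a) = lim_{k→∞} τ(a^{1/k})` of the dimension function induced
by the quasitrace `τ` at the positive element `a`. -/
def IsDimValue {T : Type*} [NonUnitalCStarAlgebra T] [PartialOrder T] [StarOrderedRing T]
    (τ : T → ℝ≥0∞) (a : T) (d : ℝ≥0∞) : Prop :=
  Filter.Tendsto (fun k : ℕ => τ (CFC.nnrpow a ((k + 1 : ℝ≥0))⁻¹)) Filter.atTop (𝓝 d)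

/-- Strict comparison for a (simple) unital C⋆-algebra `D`:  in the stabilisation
`D ⊗ 𝒦`, whenever `a, b` are nonzero positive elements with
`lim_k τ(a^{1/k}) < lim_k τ(b^{1/k})` for every lower semicontinuous `2`-quasitrace,
then `a ≾ b`. -/
def HasStrictComparison (D : Type*) [CStarAlgebra D] : Prop :=
  ∀ (T : Type) [NonUnitalCStarAlgebra T] [PartialOrder T] [StarOrderedRing T],
    ∀ _ : StabilizationOf D T, ∀ a b : T, 0 ≤ a → 0 ≤ b → a ≠ 0 → b ≠ 0 →
      (∀ τ : T → ℝ≥0∞, IsLsc2Quasitrace τ →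
        ∃ da db : ℝ≥0∞, IsDimValue τ a da ∧ IsDimValue τ b db ∧ da < db) →
      CuntzLE a b

/-- The Cuntz semigroup `Cu(D) = (D ⊗ 𝒦)₊/∼` is almost unperforated:
`(n+1)·⟨a⟩ ≤ n·⟨b⟩` implies `⟨a⟩ ≤ ⟨b⟩`.  Multiples are expressed via sums of pairwise
orthogonal Cuntz-equivalent copies in the stabilisation. -/
def CuAlmostUnperforated (D : Type*) [CStarAlgebra D] : Prop :=
  ∀ (T : Type) [NonUnitalCStarAlgebra T] [PartialOrder T] [StarOrderedRing T],
    ∀ _ : StabilizationOf D T, ∀ a b : T, 0 ≤ a → 0 ≤ b → ∀ n : ℕ,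
      (∃ (a' : Fin (n + 1) → T) (b' : Fin n → T),
        (∀ i, 0 ≤ a' i) ∧ (∀ j, 0 ≤ b' j) ∧
        (∀ i, CuntzEquiv (a' i) a) ∧ (∀ j, CuntzEquiv (b' j) b) ∧
        (∀ i i', i ≠ i' → a' i * a' i' = 0) ∧ (∀ j j', j ≠ j' → b' j * b' j' = 0) ∧
        CuntzLE (∑ i, a' i) (∑ j, b' j)) →
      CuntzLE a b

/-- Cuntz subequivalence between matrices over `D` of possibly different sizes, inside
`⋃_k M_k(D) ⊆ D ⊗ 𝒦`.  (Smallness is measured entrywise, which on matrices of a fixed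
size is equivalent to the C⋆-norm.) -/
def MatCuntzLE {D : Type*} [CStarAlgebra D] {n m : ℕ} (a : Matrix (Fin n) (Fin n) D)
    (b : Matrix (Fin m) (Fin m) D) : Prop :=
  ∀ ε : ℝ, 0 < ε → ∃ (k : ℕ) (hn : n ≤ k) (hm : m ≤ k) (v : Matrix (Fin k) (Fin k) D),
    ∀ i j, ‖(star v * matIncl hm b * v - matIncl hn a) i j‖ < ε

/-- Cuntz equivalence between matrices over `D`. -/
def MatCuntzEquiv {D : Type*} [CStarAlgebra D] {n m : ℕ} (a : Matrix (Fin n) (Fin n) D)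
    (b : Matrix (Fin m) (Fin m) D) : Prop :=
  MatCuntzLE a b ∧ MatCuntzLE b a

/-!  ### `C₀(0,1]`, quasidiagonality -/

/-- The C⋆-algebra `C₀(0,1]`. -/
abbrev C01 := ZeroAtInftyContinuousMap (Set.Ioc (0 : ℝ) 1) ℂ

/-- A (not necessarily unital) C⋆-algebra is quasidiagonal if there is a net of c.p.c. maps
into full matrix algebras which is asymptotically multiplicative and asymptotically
isometric. -/
def IsQuasidiagonal (C : Type*) [NonUnitalCStarAlgebra C] : Prop :=
  ∀ (s : Finset C) (ε : ℝ), 0 < ε →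
    ∃ (k : ℕ) (φ : C →ₗ[ℂ] Matrix (Fin k) (Fin k) ℂ),
      IsCPC φ ∧ (∀ x ∈ s, ∀ y ∈ s, ‖φ (x * y) - φ x * φ y‖ < ε) ∧
      ∀ x ∈ s, ‖x‖ - ε ≤ ‖φ x‖

/-!  ### Flips and strong self-absorption -/

/-- `A` has approximately inner flip:  on any realisation `T` of the spatial tensor
product `A ⊗ A`, the flip `a ⊗ b ↦ b ⊗ a` is a point-norm limit of inner automorphisms. -/
def HasApproxInnerFlip (A : Type*) [CStarAlgebra A] : Prop :=
  ∀ (T : Type) [CStarAlgebra T], ∀ t : TensorEmbedding A A T, t.IsMinimal →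
    ∀ (s : Finset (A × A)) (ε : ℝ), 0 < ε → ∃ u ∈ unitary T,
      ∀ p ∈ s, ‖u * t.tmul p.1 p.2 * star u - t.tmul p.2 p.1‖ < ε

/-- `D` is strongly self-absorbing: `D ≇ ℂ` is separable, unital, and there is an
isomorphism `D ≅ D ⊗ D` which is approximately unitarily equivalent to the first factor
embedding `d ↦ d ⊗ 1`. -/
def IsStronglySelfAbsorbing (D : Type*) [CStarAlgebra D] : Prop :=
  TopologicalSpace.SeparableSpace D ∧ IsEmpty (D ≃⋆ₐ[ℂ] ℂ) ∧
    ∃ (T : Type) (_ : CStarAlgebra T) (t : TensorEmbedding D D T), t.IsMinimal ∧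
      ∃ θ : D ≃⋆ₐ[ℂ] T, ∀ (s : Finset D) (ε : ℝ), 0 < ε → ∃ u ∈ unitary T,
        ∀ d ∈ s, ‖u * t.left d * star u - θ d‖ < ε

/-!
If `B` has stable rank one, every `x ∈ B` is a limit of invertibles `y = u_y |y|` (with `u_y`
unitary), so by continuity of `y ↦ |y|` there are unitaries `u` making `‖x - u |x|‖` arbitrarily
small. Representing an element of `B_ω` by a bounded sequence `(x_n)` and choosing unitaries `u_n`
with `‖x_n - u_n |x_n|‖ < 1/(n+1)`, the classes of `(u_n)` and `(|x_n|)` give an exact unitary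
polar decomposition in `B_ω`, because `ω` is free. Then `u |x|` is the limit of the invertibles
`u (|x| + ε)`, so `B_ω` has stable rank one.
-/

section CStarAlgebra

variable {A : Type*} [CStarAlgebra A] [PartialOrder A] [StarOrderedRing A]

theorem isUnit_cfcAbs {y : A} (hy : IsUnit y) : IsUnit (CFC.abs y) :=
  (isUnit_pow_iff two_ne_zero).mp (by rw [CFC.abs_sq]; exact hy.star.mul hy)

theorem exists_mem_unitary_eq_mul_cfcAbs {y : A} (hy : IsUnit y) :
    ∃ u ∈ unitary A, y = u * CFC.abs y := by
  obtain ⟨v, hv⟩ := isUnit_cfcAbs hy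
  set w : A := ↑v⁻¹
  have hvw : CFC.abs y * w = 1 := by rw [← hv]; exact v.mul_inv
  have hwv : w * CFC.abs y = 1 := by rw [← hv]; exact v.inv_mul
  have hw_star : star w * CFC.abs y = 1 := by
    simpa [(CFC.abs_nonneg y).star_eq] using congrArg star hvw
  have hu : star (y * w) * (y * w) = 1 := by
    calc star (y * w) * (y * w) = star w * (star y * y) * w := by simp only [star_mul]; noncomm_ring
      _ = (star w * CFC.abs y) * (CFC.abs y * w) := by rw [← CFC.abs_mul_abs]; noncomm_ring
      _ = 1 := by rw [hw_star, hvw, one_mul]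
  refine ⟨y * w, ?_, by rw [mul_assoc, hwv, mul_one]⟩
  exact (hy.mul v⁻¹.isUnit).mem_unitary_of_star_mul_self hu

theorem exists_mem_unitary_norm_sub_mul_cfcAbs_lt (hsr : HasStableRankOne A) (x : A) {ε : ℝ}
    (hε : 0 < ε) : ∃ u ∈ unitary A, ‖x - u * CFC.abs x‖ < ε := by
  let g : A → ℝ := fun y => ‖x - y‖ + ‖CFC.abs y - CFC.abs x‖
  have hg : Continuous g := by have := CFC.continuous_abs (A := A); fun_prop
  obtain ⟨y, hy, hyg⟩ := hsr.exists_mem_open (isOpen_lt hg continuous_const) ⟨x, by simpa [g]⟩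
  obtain ⟨u, hu, hyu⟩ := exists_mem_unitary_eq_mul_cfcAbs hy
  refine ⟨u, hu, ?_⟩
  calc ‖x - u * CFC.abs x‖ = ‖(x - y) + u * (CFC.abs y - CFC.abs x)‖ := by
        rw [mul_sub, ← hyu, sub_add_sub_cancel]
    _ ≤ g y := (norm_add_le _ _).trans_eq (by rw [CStarRing.norm_mem_unitary_mul _ hu])
    _ < ε := hyg

theorem hasStableRankOne_of_forall_exists_unitary_mul_nonneg
    (h : ∀ x : A, ∃ u ∈ unitary A, ∃ m : A, 0 ≤ m ∧ x = u * m) : HasStableRankOne A := by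
  intro x
  obtain ⟨u, hu, m, hm, rfl⟩ := h x
  have hlim : Filter.Tendsto (fun r : ℝ => u * (m + algebraMap ℝ A r)) (𝓝[>] 0) (𝓝 (u * m)) := by
    have hcont : Continuous fun r : ℝ => u * (m + algebraMap ℝ A r) := by
      have := continuous_algebraMap ℝ A; fun_prop
    simpa using (hcont.tendsto 0).mono_left nhdsWithin_le_nhds
  refine mem_closure_of_tendsto hlim (eventually_nhdsWithin_of_forall fun r (hr : 0 < r) => ?_)
  exact (Unitary.isUnit_coe (U := ⟨u, hu⟩)).mul
    (IsStrictlyPositive.nonneg_add hm (isStrictlyPositive_algebraMap hr)).isUnit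

end CStarAlgebra

namespace UltrapowerData

variable {ω : Ultrafilter ℕ} {A Aω : Type*} [CStarAlgebra A] [CStarAlgebra Aω]

theorem π_eq_of_tendsto_norm_sub (U : UltrapowerData ω A Aω) {f g : ℕ →ᵇ A}
    (h : Filter.Tendsto (fun n => ‖f n - g n‖) ω (𝓝 0)) : U.π f = U.π g := by
  rw [← sub_eq_zero, ← map_sub, U.ker]
  exact h

theorem π_mem_unitary (U : UltrapowerData ω A Aω) {f : ℕ →ᵇ A} (hf : ∀ n, f n ∈ unitary A) :
    U.π f ∈ unitary Aω := by
  refine Unitary.map_mem U.π (Unitary.mem_iff.mpr ⟨?_, ?_⟩) <;> ext n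
  exacts [(Unitary.mem_iff.mp (hf n)).1, (Unitary.mem_iff.mp (hf n)).2]

variable [PartialOrder A] [StarOrderedRing A] [PartialOrder Aω] [StarOrderedRing Aω]

theorem π_nonneg (U : UltrapowerData ω A Aω) {f : ℕ →ᵇ A} (hf : ∀ n, 0 ≤ f n) : 0 ≤ U.π f := by
  have hbound : ∀ n, ‖CFC.sqrt (f n)‖ ≤ √‖f‖ := fun n => by
    rw [CFC.norm_sqrt (f n) (hf n)]
    exact Real.sqrt_le_sqrt (f.norm_coe_le_norm n)
  let g : ℕ →ᵇ A := .ofNormedAddCommGroupDiscrete (fun n => CFC.sqrt (f n)) _ hbound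
  have hfg : f = star g * g := by
    ext n
    simp [g, (CFC.sqrt_nonneg (f n)).star_eq, CFC.sqrt_mul_sqrt_self (f n) (hf n)]
  rw [hfg, map_mul, map_star]
  exact star_mul_self_nonneg _

theorem exists_unitary_polar_decomposition (U : UltrapowerData ω A Aω)
    (hfree : (ω : Filter ℕ) ≤ Filter.cofinite)
    (happrox : ∀ (a : A) (ε : ℝ), 0 < ε → ∃ u ∈ unitary A, ‖a - u * CFC.abs a‖ < ε) (x : Aω) :
    ∃ u ∈ unitary Aω, ∃ m : Aω, 0 ≤ m ∧ m * m = star x * x ∧ x = u * m := by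
  obtain ⟨f, rfl⟩ := U.surjective x
  choose u hu hfu using fun n : ℕ => happrox (f n) (1 / (n + 1)) Nat.one_div_pos_of_nat
  have hu_bound : ∀ n, ‖u n‖ ≤ ‖(1 : A)‖ := fun n => by
    simpa using (CStarRing.norm_mem_unitary_mul (1 : A) (hu n)).le
  let useq : ℕ →ᵇ A := .ofNormedAddCommGroupDiscrete u _ hu_bound
  let mseq : ℕ →ᵇ A := .ofNormedAddCommGroupDiscrete (fun n => CFC.abs (f n)) ‖f‖
    fun n => CFC.norm_abs.trans_le (f.norm_coe_le_norm n)
  refine ⟨U.π useq, U.π_mem_unitary hu, U.π mseq, U.π_nonneg fun n => CFC.abs_nonneg _, ?_, ?_⟩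
  · rw [← map_mul, ← map_star, ← map_mul]
    congr 1
    ext n
    exact CFC.abs_mul_abs (f n)
  · rw [← map_mul]
    have hω : Filter.Tendsto (fun n : ℕ => 1 / ((n : ℝ) + 1)) ω (𝓝 0) :=
      tendsto_one_div_add_atTop_nhds_zero_nat.mono_left (Nat.cofinite_eq_atTop ▸ hfree)
    exact U.π_eq_of_tendsto_norm_sub
      (squeeze_zero (fun _ => norm_nonneg _) (fun n => (hfu n).le) hω)

end UltrapowerData

theorem statement6_general (ω : Ultrafilter ℕ) (hfree : (ω : Filter ℕ) ≤ Filter.cofinite)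
    (B Bω : Type) [CStarAlgebra B] [CStarAlgebra Bω]
    (hsr : HasStableRankOne B)
    (U : UltrapowerData ω B Bω) :
    (∀ x : Bω, ∃ u ∈ unitary Bω, ∃ m : Bω, IsPos m ∧ m * m = star x * x ∧ x = u * m) ∧
      HasStableRankOne Bω := by
  let : PartialOrder B := CStarAlgebra.spectralOrder B
  have : StarOrderedRing B := CStarAlgebra.spectralOrderedRing B
  let : PartialOrder Bω := CStarAlgebra.spectralOrder Bω
  have : StarOrderedRing Bω := CStarAlgebra.spectralOrderedRing Bω
  have hpolar := U.exists_unitary_polar_decomposition hfree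
    fun a _ hε => exists_mem_unitary_norm_sub_mul_cfcAbs_lt hsr a hε
  refine ⟨fun x => ?_, hasStableRankOne_of_forall_exists_unitary_mul_nonneg fun x => ?_⟩
  · obtain ⟨u, hu, m, hm, hmm, hx⟩ := hpolar x
    exact ⟨u, hu, m, CStarAlgebra.nonneg_iff_eq_star_mul_self.mp hm, hmm, hx⟩
  · obtain ⟨u, hu, m, hm, -, hx⟩ := hpolar x
    exact ⟨u, hu, m, hm, hx⟩

/-- Unitary polar decomposition in ultrapowers.  If `B` is separable,
unital with stable rank one, every `x ∈ B_ω` has a unitary polar decomposition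
`x = u * |x|`, and consequently `B_ω` has stable rank one.  (Here `|x|` is characterised
as the positive element whose square is `star x * x`.) -/
theorem statement6 (ω : Ultrafilter ℕ) (hfree : (ω : Filter ℕ) ≤ Filter.cofinite)
    (B Bω : Type) [CStarAlgebra B] [CStarAlgebra Bω]
    (hsep : TopologicalSpace.SeparableSpace B) (hsr : HasStableRankOne B)
    (U : UltrapowerData ω B Bω) :
    (∀ x : Bω, ∃ u ∈ unitary Bω, ∃ m : Bω, IsPos m ∧ m * m = star x * x ∧ x = u * m) ∧
      HasStableRankOne Bω :=
  statement6_general ω hfree B Bω hsr U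

end SWW
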